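/- Let D, E be normed spaces, Θ ⊂ ℝ^d open, θ ↦ H_θ a continuously differentiable map from Θ to E with derivative θ ↦ Ḣ_θ (continuous in θ, each Ḣ_θ a bounded linear map ℝ^d → E), and suppose there is a constant C with ‖x‖_E ≤ C‖x‖_D for all x (i.e. the identity D → E is bounded). Then the map φ: D × Θ → E, φ(H,θ) = H − H_θ, is uniformly Hadamard differentiable at every point (H,θ), with derivative (g,h) ↦ g − Ḣ_θ h. -/

import Mathlib

open Filter Topology

/-- Uniform Hadamard differentiability of `φ` at `x₀`, within the domain `S`
(points of the approximating sequences are required to stay in `S`). -/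
def UnifHadamardDiffWithin {D E : Type*} [NormedAddCommGroup D] [NormedSpace ℝ D]
    [NormedAddCommGroup E] [NormedSpace ℝ E]
    (φ : D → E) (S : Set D) (x₀ : D) (L : D →L[ℝ] E) : Prop :=
  ∀ (t : ℕ → ℝ) (xn hn : ℕ → D) (h : D),
    Tendsto t atTop (𝓝 0) → (∀ n, t n ≠ 0) →
    Tendsto xn atTop (𝓝 x₀) → Tendsto hn atTop (𝓝 h) →
    (∀ n, xn n ∈ S) → (∀ n, xn n + t n • hn n ∈ S) →
    Tendsto (fun n => (t n)⁻¹ • (φ (xn n + t n • hn n) - φ (xn n))) atTop (𝓝 (L h))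

/- Strict differentiability says `f y - f z - L (y - z) = o(y - z)` as `(y, z) → (x, x)`;
along `y = xₙ + tₙ hₙ`, `z = xₙ` the increment `tₙ hₙ` is `O(tₙ)`, so the remainder
vanishes after division by `tₙ`. A `C¹` map is strictly differentiable, which gives the
theorem. -/
theorem HasStrictFDerivAt.unifHadamardDiffWithin {D E : Type*} [NormedAddCommGroup D]
    [NormedSpace ℝ D] [NormedAddCommGroup E] [NormedSpace ℝ E]
    {f : D → E} {L : D →L[ℝ] E} {x : D} (hf : HasStrictFDerivAt f L x) (S : Set D) :
    UnifHadamardDiffWithin f S x L := by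
  intro t xn hn h ht ht0 hxn hhn _ _
  have hpair : Tendsto (fun n => (xn n + t n • hn n, xn n)) atTop (𝓝 (x, x)) := by
    refine Tendsto.prodMk_nhds ?_ hxn
    simpa using hxn.add (ht.smul hhn)
  have hremainder : (fun n => f (xn n + t n • hn n) - f (xn n) - L (t n • hn n))
      =o[atTop] fun n => t n • hn n := by
    simpa [Function.comp_def] using hf.isLittleO.comp_tendsto hpair
  have hincrement : (fun n => t n • hn n) =O[atTop] t := by
    simpa using (Asymptotics.isBigO_refl t atTop).smul (hhn.isBigO_one ℝ)
  have hquotient : ∀ n, (t n)⁻¹ • (f (xn n + t n • hn n) - f (xn n))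
      = L (hn n) + (t n)⁻¹ • (f (xn n + t n • hn n) - f (xn n) - L (t n • hn n)) := by
    intro n
    rw [map_smul, smul_sub (t n)⁻¹ _ (t n • L (hn n)), smul_smul, inv_mul_cancel₀ (ht0 n),
      one_smul, add_sub_cancel, smul_sub]
  simp only [hquotient]
  simpa using ((L.continuous.tendsto h).comp hhn).add
    (hremainder.trans_isBigO hincrement).tendsto_inv_smul_nhds_zero

theorem stmt5_general {D E : Type*} [NormedAddCommGroup D] [NormedSpace ℝ D]
    [NormedAddCommGroup E] [NormedSpace ℝ E] {d : ℕ}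
    (ι : D →L[ℝ] E)
    (Θ : Set (Fin d → ℝ)) (hΘ : IsOpen Θ)
    (Hmap : (Fin d → ℝ) → E) (Hdot : (Fin d → ℝ) → ((Fin d → ℝ) →L[ℝ] E))
    (hderiv : ∀ θ ∈ Θ, HasFDerivAt Hmap (Hdot θ) θ)
    (hcont : ContinuousOn Hdot Θ)
    (H₀ : D) (θ₀ : Fin d → ℝ) (hθ₀ : θ₀ ∈ Θ) :
    UnifHadamardDiffWithin (fun p : D × (Fin d → ℝ) => ι p.1 - Hmap p.2)
      (Set.univ ×ˢ Θ) (H₀, θ₀)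
      (ι.comp (ContinuousLinearMap.fst ℝ D (Fin d → ℝ)) -
        (Hdot θ₀).comp (ContinuousLinearMap.snd ℝ D (Fin d → ℝ))) := by
  have hHmap : HasStrictFDerivAt Hmap (Hdot θ₀) θ₀ :=
    hasStrictFDerivAt_of_hasFDerivAt_of_continuousAt
      ((hΘ.eventually_mem hθ₀).mono hderiv)
      (hcont.continuousAt (hΘ.mem_nhds hθ₀))
  have hφ : HasStrictFDerivAt (fun p : D × (Fin d → ℝ) => ι p.1 - Hmap p.2)
      (ι.comp (ContinuousLinearMap.fst ℝ D (Fin d → ℝ)) -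
        (Hdot θ₀).comp (ContinuousLinearMap.snd ℝ D (Fin d → ℝ))) (H₀, θ₀) :=
    (ι.hasStrictFDerivAt.comp (H₀, θ₀) hasStrictFDerivAt_fst).sub
      (hHmap.comp (H₀, θ₀) hasStrictFDerivAt_snd)
  exact hφ.unifHadamardDiffWithin _

/-- If `θ ↦ H_θ` is continuously differentiable on the open set `Θ ⊂ ℝ^d` and the
identity `D → E` is a bounded linear map `ι`, then `φ(H,θ) = ι H − H_θ` is uniformly
Hadamard differentiable at every `(H₀,θ₀)` with `θ₀ ∈ Θ`, with derivative
`(g,h) ↦ ι g − Ḣ_{θ₀} h`. -/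
theorem stmt5 {D E : Type*} [NormedAddCommGroup D] [NormedSpace ℝ D]
    [NormedAddCommGroup E] [NormedSpace ℝ E] {d : ℕ}
    (ι : D →L[ℝ] E) (C : ℝ) (hι : ∀ x : D, ‖ι x‖ ≤ C * ‖x‖)
    (Θ : Set (Fin d → ℝ)) (hΘ : IsOpen Θ)
    (Hmap : (Fin d → ℝ) → E) (Hdot : (Fin d → ℝ) → ((Fin d → ℝ) →L[ℝ] E))
    (hderiv : ∀ θ ∈ Θ, HasFDerivAt Hmap (Hdot θ) θ)
    (hcont : ContinuousOn Hdot Θ)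
    (H₀ : D) (θ₀ : Fin d → ℝ) (hθ₀ : θ₀ ∈ Θ) :
    UnifHadamardDiffWithin (fun p : D × (Fin d → ℝ) => ι p.1 - Hmap p.2)
      (Set.univ ×ˢ Θ) (H₀, θ₀)
      (ι.comp (ContinuousLinearMap.fst ℝ D (Fin d → ℝ)) -
        (Hdot θ₀).comp (ContinuousLinearMap.snd ℝ D (Fin d → ℝ))) :=
  stmt5_general ι Θ hΘ Hmap Hdot hderiv hcont H₀ θ₀ hθ₀
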